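/- arXiv:1203.0481 — 2 statements merged into one kernel-verified Lean document; each statement's English description precedes it below -/
import Mathlib

section
/- Let A be an attractor of the IFS F with basin B(A), let x_0 ∈ B(A) and let σ ∈ Σ^∞. Then C_∞(x_0,σ) ⊆ F(C_∞(x_0,σ)) = ⋃_{τ∈Σ} f_τ(C_∞(x_0,σ)). -/
open Metric Filter Set MeasureTheory

variable {X : Type*} [MetricSpace X] [CompleteSpace X]
variable {Λ : Type*} [Fintype Λ] [Nonempty Λ]

/-- The Hutchinson operator of the IFS given by the maps `f a`, `a : Λ`. -/
def Hutch (f : Λ → X → X) (B : Set X) : Set X := ⋃ a : Λ, f a '' B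

/-- `A` attracts, under iteration of the Hutchinson operator, every nonempty
compact subset of `U`, in the Hausdorff metric. -/
def Attracts (f : Λ → X → X) (A U : Set X) : Prop :=
  ∀ B : Set X, B.Nonempty → IsCompact B → B ⊆ U →
    Tendsto (fun k : ℕ => hausdorffDist ((Hutch f)^[k] B) A) atTop (nhds 0)

/-- `A` is an attractor of the IFS `f`: a nonempty compact set admitting an open
neighbourhood `U ⊇ A` all of whose nonempty compact subsets are attracted to `A`. -/
def IsAttractor (f : Λ → X → X) (A : Set X) : Prop :=
  A.Nonempty ∧ IsCompact A ∧ ∃ U : Set X, IsOpen U ∧ A ⊆ U ∧ Attracts f A U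

/-- The basin of the attractor `A`: the union of all open `U ⊇ A` from which `A` attracts. -/
def basin (f : Λ → X → X) (A : Set X) : Set X :=
  ⋃₀ {U : Set X | IsOpen U ∧ A ⊆ U ∧ Attracts f A U}

/-- The chaos game orbit of `x₀` driven by the sequence `σ` (0-indexed: `σ 0` acts first). -/
def orbit (f : Λ → X → X) (σ : ℕ → Λ) (x₀ : X) : ℕ → X
  | 0 => x₀
  | k + 1 => f (σ k) (orbit f σ x₀ k)

/-- `C_K(x₀,σ)`: the closure of the tail `{x_k : k ≥ K}` of the chaos game orbit. -/
def tailSet (f : Λ → X → X) (σ : ℕ → Λ) (x₀ : X) (K : ℕ) : Set X :=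
  closure {y : X | ∃ k : ℕ, K ≤ k ∧ orbit f σ x₀ k = y}

/-- `C_∞(x₀,σ) = ⋂_K C_K(x₀,σ)`. -/
def Cinf (f : Λ → X → X) (σ : ℕ → Λ) (x₀ : X) : Set X :=
  ⋂ K : ℕ, tailSet f σ x₀ K

/-- For a word `w = (σ₁, …, σ_m)`, `wordApply f w = f_{σ_m} ∘ ⋯ ∘ f_{σ_1}`
(the letter `w 0` acts first). -/
def wordApply (f : Λ → X → X) {m : ℕ} (w : Fin m → Λ) (x : X) : X :=
  (List.ofFn w).foldl (fun y a => f a y) x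

/-- A sequence of symbols is disjunctive if it contains every finite word
as a block of consecutive letters. -/
def Disjunctive {Γ : Type*} (σ : ℕ → Γ) : Prop :=
  ∀ (m : ℕ) (w : Fin m → Γ), ∃ j : ℕ, ∀ l : Fin m, σ (j + l.1) = w l

/-- `fibreComp f ρ K = f_{ρ_1} ∘ f_{ρ_2} ∘ ⋯ ∘ f_{ρ_K}` (0-indexed: `f (ρ 0) ∘ ⋯ ∘ f (ρ (K-1))`). -/
def fibreComp (f : Λ → X → X) (ρ : ℕ → Λ) : ℕ → X → X
  | 0 => id
  | K + 1 => fibreComp f ρ K ∘ f (ρ K)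

/-- The fibre `A_ρ = ⋂_{K ≥ 1} f_{ρ_1} ∘ ⋯ ∘ f_{ρ_K}(A)` of the attractor `A`. -/
def fibre (f : Λ → X → X) (A : Set X) (ρ : ℕ → Λ) : Set X :=
  ⋂ K : ℕ, fibreComp f ρ (K + 1) '' A

/-- `A` is strongly fibred: every open set meeting `A` contains a fibre. -/
def StronglyFibred (f : Λ → X → X) (A : Set X) : Prop :=
  ∀ U : Set X, IsOpen U → (U ∩ A).Nonempty → ∃ ρ : ℕ → Λ, fibre f A ρ ⊆ U

/-! `C_∞(x₀,σ)` is the set of cluster points of the chaos game orbit `x`, i.e. the limits of `x`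
along ultrafilters `U ≤ atTop`. Since `x` approaches the compact attractor, it converges along
every such `U`. Given `y = lim_U x_k`, finiteness of `Σ` makes `k ↦ σ_{k-1}` constant, say `τ`,
along `U`, and the predecessors `x_{k-1}` converge along `U` to some `w ∈ C_∞(x₀,σ)`; continuity
of `f_τ` then gives `y = f_τ(w)`. -/

theorem IsCompact.exists_tendsto_of_tendsto_infDist {α Y : Type*} [PseudoMetricSpace Y]
    {K : Set Y} (hK : IsCompact K) (hne : K.Nonempty) {U : Ultrafilter α} {x : α → Y}
    (hx : Tendsto (fun n => infDist (x n) K) U (nhds 0)) : ∃ w ∈ K, Tendsto x U (nhds w) := by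
  choose a haK ha using fun n => hK.exists_infDist_eq_dist hne (x n)
  obtain ⟨w, hwK, hw⟩ := hK.ultrafilter_le_nhds (U.map a)
    (le_principal_iff.2 (show a ⁻¹' K ∈ (U : Filter α) from univ_mem' haK))
  exact ⟨w, hwK, Tendsto.congr_dist (f₁ := a) hw (by simpa [dist_comm, ← ha] using hx)⟩

theorem MapClusterPt.exists_mapClusterPt_apply_eq {ι Y : Type*} [TopologicalSpace Y] [T2Space Y]
    [Finite ι] {f : ι → Y → Y} (hf : ∀ a, Continuous (f a)) {σ : ℕ → ι} {x : ℕ → Y}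
    (hx : ∀ n, x (n + 1) = f (σ n) (x n))
    (hconv : ∀ U : Ultrafilter ℕ, (U : Filter ℕ) ≤ atTop → ∃ w, Tendsto x U (nhds w))
    {y : Y} (hy : MapClusterPt y atTop x) : ∃ a w, MapClusterPt w atTop x ∧ f a w = y := by
  obtain ⟨U, hU, hUy⟩ := mapClusterPt_iff_ultrafilter.1 hy
  obtain ⟨a, ha⟩ := (U.map fun n => σ (n - 1)).eq_pure_of_finite
  have hpred : (U.map (· - 1) : Filter ℕ) ≤ atTop := (tendsto_sub_atTop_nat 1).mono_left hU
  obtain ⟨w, hw⟩ := hconv _ hpred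
  refine ⟨a, w, mapClusterPt_iff_ultrafilter.2 ⟨_, hpred, hw⟩, tendsto_nhds_unique ?_ hUy⟩
  refine ((hf a).tendsto w |>.comp (tendsto_map'_iff.1 hw)).congr' ?_
  have hσ : ∀ᶠ n in (U : Filter ℕ), σ (n - 1) = a := by
    change (fun n => σ (n - 1)) ⁻¹' {a} ∈ U
    rw [← Ultrafilter.mem_map, ha]
    rfl
  filter_upwards [hσ, hU (eventually_ge_atTop 1)] with n hn hn1
  obtain ⟨m, rfl⟩ := Nat.exists_eq_add_of_le' hn1
  simp_all

section

variable {Y ι : Type*}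

theorem orbit_mem_hutch_iterate (f : ι → Y → Y) (σ : ℕ → ι) (x₀ : Y) :
    ∀ k, orbit f σ x₀ k ∈ (Hutch f)^[k] {x₀}
  | 0 => rfl
  | k + 1 => by
    rw [Function.iterate_succ_apply']
    exact mem_iUnion.2 ⟨σ k, mem_image_of_mem _ (orbit_mem_hutch_iterate f σ x₀ k)⟩

theorem Set.Finite.hutch_iterate [Finite ι] (f : ι → Y → Y) {B : Set Y} (hB : B.Finite) (k : ℕ) :
    ((Hutch f)^[k] B).Finite := by
  induction k with
  | zero => exact hB
  | succ k ih =>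
    rw [Function.iterate_succ_apply']
    exact finite_iUnion fun a => ih.image (f a)

variable [MetricSpace Y]

theorem Attracts.tendsto_infDist_orbit [Finite ι] {f : ι → Y → Y} {A U : Set Y}
    (hU : Attracts f A U) (hne : A.Nonempty) (hA : Bornology.IsBounded A) {x₀ : Y} (hx₀ : x₀ ∈ U)
    (σ : ℕ → ι) : Tendsto (fun k => infDist (orbit f σ x₀ k) A) atTop (nhds 0) := by
  refine squeeze_zero (fun _ => infDist_nonneg) (fun k => ?_)
    (hU {x₀} (singleton_nonempty x₀) isCompact_singleton (singleton_subset_iff.2 hx₀))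
  have hmem := orbit_mem_hutch_iterate f σ x₀ k
  -- `F^k {x₀}` is finite, so `hausdorffDist` is not the junk value of an infinite `hausdorffEDist`
  exact infDist_le_hausdorffDist_of_mem hmem <| hausdorffEDist_ne_top_of_nonempty_of_bounded
    ⟨_, hmem⟩ hne ((finite_singleton x₀).hutch_iterate f k).isBounded hA

theorem cinf_eq_setOf_mapClusterPt (f : ι → Y → Y) (σ : ℕ → ι) (x₀ : Y) :
    Cinf f σ x₀ = {y | MapClusterPt y atTop (orbit f σ x₀)} := by
  ext y
  simp [Cinf, tailSet, mapClusterPt_atTop_iff_forall_mem_closure, image, and_comm]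

end

/-- Lemma 4: `C_∞(x₀,σ) ⊆ F(C_∞(x₀,σ)) = ⋃_{τ∈Σ} f_τ(C_∞(x₀,σ))`. -/
theorem chaosGame_Cinf_subset_hutchinson
    (f : Λ → X → X) (hf : ∀ a : Λ, Continuous (f a))
    (A : Set X) (hA : IsAttractor f A)
    (x₀ : X) (hx₀ : x₀ ∈ basin f A) (σ : ℕ → Λ) :
    Cinf f σ x₀ ⊆ Hutch f (Cinf f σ x₀) := by
  obtain ⟨hAne, hAcpt, -⟩ := hA
  obtain ⟨U, ⟨-, -, hUA⟩, hx₀U⟩ := hx₀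
  have hdist := hUA.tendsto_infDist_orbit hAne hAcpt.isBounded hx₀U σ
  rw [cinf_eq_setOf_mapClusterPt]
  intro y hy
  obtain ⟨a, w, hw, rfl⟩ := hy.exists_mapClusterPt_apply_eq hf (fun _ => rfl) fun V hV =>
    (hAcpt.exists_tendsto_of_tendsto_infDist hAne (hdist.mono_left hV)).imp fun _ => And.right
  exact mem_iUnion.2 ⟨a, w, hw, rfl⟩
end

section
/- Let A be an attractor of the IFS F with basin B(A), let x_0 ∈ B(A), let σ ∈ Σ^∞, and let θ_1 θ_2 … θ_P ∈ Σ^P be a finite word (P ≥ 1). If σ_{M+1} … σ_{M+P} = θ_1 θ_2 … θ_P for infinitely many distinct positive integers M, then f_{θ_P} ∘ … ∘ f_{θ_1}(C_∞(x_0,σ)) ∩ C_∞(x_0,σ) ≠ ∅. -/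
open Metric Filter Set MeasureTheory

variable {X : Type*} [MetricSpace X] [CompleteSpace X]
variable {Λ : Type*} [Fintype Λ] [Nonempty Λ]

/-!
Along the positions `M` where `θ` occurs, the orbit points `x_M` approach the compact attractor, so
they have a cluster point `a ∈ A`, which lies in `C_∞`. Since `x_{M+P} = f_θ(x_M)` at those positions,
continuity makes `f_θ(a)` a cluster point of the orbit as well, so `f_θ(a) ∈ C_∞` too.
-/

open Topology

theorem IsCompact.exists_mapClusterPt_of_tendsto_nhdsSet {X ι : Type*} [TopologicalSpace X]
    {s : Set X} (hs : IsCompact s) {l : Filter ι} [NeBot l] {u : ι → X}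
    (hu : Tendsto u l (𝓝ˢ s)) : ∃ x ∈ s, MapClusterPt x l u := by
  by_contra! h
  have hdisj : Disjoint (𝓝ˢ s) (map u l) :=
    hs.disjoint_nhdsSet_left.2 fun x hx => disjoint_iff.2 (not_neBot.1 (h x hx))
  exact (map_neBot (f := l) (m := u)).ne (hdisj.eq_bot_of_ge hu)

section ChaosGame

variable {X Λ : Type*}

theorem orbit_mem_iterate_hutch (f : Λ → X → X) (σ : ℕ → Λ) (x₀ : X) (k : ℕ) :
    orbit f σ x₀ k ∈ (Hutch f)^[k] {x₀} := by
  induction k with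
  | zero => exact Set.mem_singleton x₀
  | succ k ih =>
    rw [Function.iterate_succ_apply']
    exact Set.mem_iUnion.2 ⟨σ k, Set.mem_image_of_mem _ ih⟩

theorem finite_iterate_hutch [Finite Λ] (f : Λ → X → X) {B : Set X} (hB : B.Finite) (k : ℕ) :
    ((Hutch f)^[k] B).Finite := by
  induction k with
  | zero => exact hB
  | succ k ih =>
    rw [Function.iterate_succ_apply']
    exact Set.finite_iUnion fun a => ih.image _

theorem orbit_add_eq_wordApply (f : Λ → X → X) (σ : ℕ → Λ) (x₀ : X) (M P : ℕ) :
    orbit f σ x₀ (M + P) = wordApply f (fun l : Fin P => σ (M + l)) (orbit f σ x₀ M) := by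
  induction P with
  | zero => rfl
  | succ P ih =>
    simp only [wordApply, List.ofFn_succ', List.concat_eq_append, List.foldl_append,
      List.foldl_cons, List.foldl_nil, Fin.val_castSucc, Fin.val_last] at ih ⊢
    rw [← ih]
    rfl

theorem continuous_wordApply [TopologicalSpace X] {f : Λ → X → X} (hf : ∀ a, Continuous (f a))
    {m : ℕ} (w : Fin m → Λ) : Continuous (wordApply f w) := by
  unfold wordApply
  induction List.ofFn w with
  | nil => exact continuous_id
  | cons a l ih => exact ih.comp (hf a)

theorem tendsto_orbit_nhdsSet [MetricSpace X] [Finite Λ] (f : Λ → X → X) {A : Set X}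
    (hAne : A.Nonempty) (hA : IsCompact A) {x₀ : X} (hx₀ : x₀ ∈ basin f A) (σ : ℕ → Λ) :
    Tendsto (orbit f σ x₀) atTop (𝓝ˢ A) := by
  obtain ⟨U, ⟨-, -, hattr⟩, hx₀U⟩ := hx₀
  have hhaus := hattr {x₀} (Set.singleton_nonempty x₀) isCompact_singleton
    (Set.singleton_subset_iff.2 hx₀U)
  have hle (k : ℕ) : infDist (orbit f σ x₀ k) A ≤ hausdorffDist ((Hutch f)^[k] {x₀}) A :=
    infDist_le_hausdorffDist_of_mem (orbit_mem_iterate_hutch f σ x₀ k) <|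
      hausdorffEDist_ne_top_of_nonempty_of_bounded ⟨_, orbit_mem_iterate_hutch f σ x₀ k⟩ hAne
        (finite_iterate_hutch f (Set.finite_singleton x₀) k).isBounded hA.isBounded
  have hinf := squeeze_zero (fun k => infDist_nonneg) hle hhaus
  exact (Metric.tendsto_nhdsSet hA hAne).2 fun ε hε => (tendsto_order.1 hinf).2 ε hε

theorem mem_Cinf_iff_mapClusterPt [MetricSpace X] {f : Λ → X → X} {σ : ℕ → Λ} {x₀ z : X} :
    z ∈ Cinf f σ x₀ ↔ MapClusterPt z atTop (orbit f σ x₀) := by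
  rw [mapClusterPt_atTop_iff_forall_mem_closure, Cinf, Set.mem_iInter]
  rfl

end ChaosGame

theorem chaosGame_word_image_inter_Cinf_general
    (f : Λ → X → X) (hf : ∀ a : Λ, Continuous (f a))
    (A : Set X) (hA : IsAttractor f A)
    (x₀ : X) (hx₀ : x₀ ∈ basin f A) (σ : ℕ → Λ)
    (P : ℕ) (θ : Fin P → Λ)
    (hocc : {M : ℕ | ∀ l : Fin P, σ (M + l.1) = θ l}.Infinite) :
    (wordApply f θ '' Cinf f σ x₀ ∩ Cinf f σ x₀).Nonempty := by
  obtain ⟨hAne, hAcpt, -⟩ := hA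
  set S := {M : ℕ | ∀ l : Fin P, σ (M + l.1) = θ l}
  have : NeBot (atTop ⊓ 𝓟 S) := frequently_iff_neBot.1 (Nat.frequently_atTop_iff_infinite.2 hocc)
  have horb : Tendsto (orbit f σ x₀) (atTop ⊓ 𝓟 S) (𝓝ˢ A) :=
    (tendsto_orbit_nhdsSet f hAne hAcpt hx₀ σ).mono_left inf_le_left
  obtain ⟨a, -, ha⟩ := hAcpt.exists_mapClusterPt_of_tendsto_nhdsSet horb
  have hshift : orbit f σ x₀ ∘ (· + P) =ᶠ[atTop ⊓ 𝓟 S] wordApply f θ ∘ orbit f σ x₀ := by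
    filter_upwards [mem_inf_of_right (mem_principal_self S)] with M hM
    simp only [Function.comp_apply, orbit_add_eq_wordApply, show (fun l : Fin P => σ (M + l)) = θ
      from funext hM]
  have hfa : MapClusterPt (wordApply f θ a) (atTop ⊓ 𝓟 S) (orbit f σ x₀ ∘ (· + P)) := by
    rw [MapClusterPt, map_congr hshift]
    exact ha.continuousAt_comp (continuous_wordApply hf θ).continuousAt
  exact ⟨wordApply f θ a, ⟨a, mem_Cinf_iff_mapClusterPt.2 (ha.mono inf_le_left), rfl⟩,
    mem_Cinf_iff_mapClusterPt.2 (hfa.of_comp ((tendsto_add_atTop_nat P).mono_left inf_le_left))⟩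

/-- Lemma 2: if the word `θ = θ_1 … θ_P` occurs in `σ` at position
`M + 1` for infinitely many `M`, then `f_{θ_P} ∘ ⋯ ∘ f_{θ_1}(C_∞(x₀,σ)) ∩ C_∞(x₀,σ) ≠ ∅`. -/
theorem chaosGame_word_image_inter_Cinf
    (f : Λ → X → X) (hf : ∀ a : Λ, Continuous (f a))
    (A : Set X) (hA : IsAttractor f A)
    (x₀ : X) (hx₀ : x₀ ∈ basin f A) (σ : ℕ → Λ)
    (P : ℕ) (hP : 1 ≤ P) (θ : Fin P → Λ)
    (hocc : {M : ℕ | ∀ l : Fin P, σ (M + l.1) = θ l}.Infinite) :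
    (wordApply f θ '' Cinf f σ x₀ ∩ Cinf f σ x₀).Nonempty :=
  chaosGame_word_image_inter_Cinf_general f hf A hA x₀ hx₀ σ P θ hocc
end
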